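/- arXiv:2110.11647 — 3 statements merged into one kernel-verified Lean document; each statement's English description precedes it below -/
import Mathlib

section
/- In the 3-Partition reduction for the proactive min-cost flow problem, any feasible scenario flow must saturate all m arcs (E_j, α): the flow on each arc (E_j, α) equals B. -/
/-- 3-Partition reduction for the proactive min-cost flow problem:
`fαV i` is the flow on arc `(α, V_i)`, `fVE i j` on `(V_i, E_j)` and `fEα j` on `(E_j, α)`. -/
theorem mcf_3partition_scenario_saturates
    (m B : ℕ) (s : Fin (3 * m) → ℕ)
    (hlb : ∀ i, B < 4 * s i) (hub : ∀ i, 2 * s i < B)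
    (hsum : ∑ i, s i = m * B)
    (fαV : Fin (3 * m) → ℕ) (fVE : Fin (3 * m) → Fin m → ℕ) (fEα : Fin m → ℕ)
    -- capacities
    (hcap1 : ∀ i, fαV i ≤ B) (hcap2 : ∀ i j, fVE i j ≤ B) (hcap3 : ∀ j, fEα j ≤ B)
    -- scenario lower bounds
    (hdem : ∀ i, s i ≤ fαV i)
    -- conservation
    (hV : ∀ i, fαV i = ∑ j, fVE i j)
    (hE : ∀ j, (∑ i, fVE i j) = fEα j)
    (hα : ∑ j, fEα j = ∑ i, fαV i) :
    ∀ j, fEα j = B := by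
  have hge : m * B ≤ ∑ j, fEα j := by
    rw [hα, ← hsum]
    exact Finset.sum_le_sum fun i _ => hdem i
  intro j
  by_contra hne
  have hlt : fEα j < B := lt_of_le_of_ne (hcap3 j) hne
  have : ∑ j, fEα j < ∑ _j : Fin m, B :=
    Finset.sum_lt_sum (fun i _ => hcap3 i) ⟨j, Finset.mem_univ j, hlt⟩
  simp [Finset.sum_const, Finset.card_univ, mul_comm] at this
  omega
end

section
/- In the 3-Partition reduction for the proactive min-cost flow problem, any feasible scenario circulation uses (has positive flow on) at least 2 arcs among {(α,V_i)} ∪ {(V_i,E_j) : j} for each element i, hence the structural distance from the zero flow is at least m + 6m = 7m, with equality attainable iff the instance of 3-Partition is a yes-instance. -/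
/-- Feasible scenario circulations of the 3-Partition reduction. -/
def Feas3P (m B : ℕ) (s : Fin (3 * m) → ℕ)
    (fαV : Fin (3 * m) → ℕ) (fVE : Fin (3 * m) → Fin m → ℕ) (fEα : Fin m → ℕ) : Prop :=
  (∀ i, fαV i ≤ B) ∧ (∀ i j, fVE i j ≤ B) ∧ (∀ j, fEα j ≤ B) ∧
  (∀ i, s i ≤ fαV i) ∧
  (∀ i, fαV i = ∑ j, fVE i j) ∧ (∀ j, (∑ i, fVE i j) = fEα j) ∧
  (∑ j, fEα j = ∑ i, fαV i)

/-- Structural distance from the zero nominal flow: number of arcs carrying positive flow. -/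
def cost3P {m : ℕ} (fαV : Fin (3 * m) → ℕ) (fVE : Fin (3 * m) → Fin m → ℕ)
    (fEα : Fin m → ℕ) : ℕ :=
  (Finset.univ.filter fun i => 0 < fαV i).card +
  (∑ i, (Finset.univ.filter fun j => 0 < fVE i j).card) +
  (Finset.univ.filter fun j => 0 < fEα j).card

theorem mcf_3partition_cost_7m
    (m B : ℕ) (hm : 0 < m) (s : Fin (3 * m) → ℕ)
    (hlb : ∀ i, B < 4 * s i) (hub : ∀ i, 2 * s i < B)
    (hsum : ∑ i, s i = m * B) :
    (∀ fαV fVE fEα, Feas3P m B s fαV fVE fEα → 7 * m ≤ cost3P fαV fVE fEα) ∧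
    ((∃ fαV fVE fEα, Feas3P m B s fαV fVE fEα ∧ cost3P fαV fVE fEα = 7 * m) ↔
      (∃ part : Fin (3 * m) → Fin m,
        ∀ j, (Finset.univ.filter fun i => part i = j).card = 3 ∧
          ∑ i ∈ Finset.univ.filter (fun i => part i = j), s i = B)) := by
  -- basic facts about s and B
  have hspos : ∀ i, 1 ≤ s i := by intro i; have := hlb i; omega
  have hB3 : 3 ≤ B := by
    have i0 : Fin (3 * m) := ⟨0, by omega⟩
    have := hlb i0; have := hub i0; omega
  -- component-wise analysis of the cost for a feasible circulation
  have key : ∀ fαV fVE fEα, Feas3P m B s fαV fVE fEα →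
      (Finset.univ.filter fun i => 0 < fαV i).card = 3 * m ∧
      (∀ i : Fin (3 * m), 1 ≤ (Finset.univ.filter fun j => 0 < fVE i j).card) ∧
      m ≤ (Finset.univ.filter fun j => 0 < fEα j).card := by
    intro fαV fVE fEα hF
    obtain ⟨h1, h2, h3, h4, h5, h6, h7⟩ := hF
    have hαpos : ∀ i, 0 < fαV i := fun i => lt_of_lt_of_le (hspos i) (h4 i)
    refine ⟨?_, ?_, ?_⟩
    · rw [Finset.filter_true_of_mem (fun i _ => hαpos i)]
      simp
    · intro i
      have hpos : 0 < ∑ j, fVE i j := by rw [← h5 i]; exact hαpos i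
      obtain ⟨j, hj⟩ : ∃ j, 0 < fVE i j := by
        by_contra hc; push_neg at hc
        have : ∑ j, fVE i j = 0 := Finset.sum_eq_zero fun j _ => by have := hc j; omega
        omega
      exact Finset.card_pos.mpr ⟨j, by simp [hj]⟩
    · -- the sum of fEα is at least m*B, each term at most B
      have hge : m * B ≤ ∑ j, fEα j := by
        rw [h7, ← hsum]
        exact Finset.sum_le_sum fun i _ => h4 i
      have hsub : ∑ j, fEα j = ∑ j ∈ Finset.univ.filter (fun j => 0 < fEα j), fEα j := by
        refine (Finset.sum_subset (Finset.filter_subset _ _) ?_).symm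
        intro x _ hx
        simp only [Finset.mem_filter, Finset.mem_univ, true_and, not_lt] at hx
        omega
      have hle : ∑ j ∈ Finset.univ.filter (fun j => 0 < fEα j), fEα j ≤
          (Finset.univ.filter fun j => 0 < fEα j).card * B := by
        have := Finset.sum_le_card_nsmul (Finset.univ.filter fun j => 0 < fEα j) fEα B
          (fun j _ => h3 j)
        simpa using this
      have hmul : m * B ≤ (Finset.univ.filter fun j => 0 < fEα j).card * B :=
        le_trans hge (le_trans (le_of_eq hsub) hle)
      exact Nat.le_of_mul_le_mul_right hmul (by omega)
  -- lower bound
  have lower : ∀ fαV fVE fEα, Feas3P m B s fαV fVE fEα → 7 * m ≤ cost3P fαV fVE fEα := by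
    intro fαV fVE fEα hF
    obtain ⟨k1, k2, k3⟩ := key fαV fVE fEα hF
    have k2' : 3 * m ≤ ∑ i, (Finset.univ.filter fun j => 0 < fVE i j).card := by
      calc 3 * m = ∑ _i : Fin (3 * m), 1 := by simp
        _ ≤ _ := Finset.sum_le_sum fun i _ => k2 i
    unfold cost3P
    omega
  refine ⟨lower, ?_, ?_⟩
  · -- forward: equality gives a partition
    rintro ⟨fαV, fVE, fEα, hF, hcost⟩
    obtain ⟨h1, h2, h3, h4, h5, h6, h7⟩ := hF
    obtain ⟨k1, k2, k3⟩ := key fαV fVE fEα ⟨h1, h2, h3, h4, h5, h6, h7⟩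
    have k3' : (Finset.univ.filter fun j => 0 < fEα j).card ≤ m := by
      have := Finset.card_filter_le (Finset.univ : Finset (Fin m)) (fun j => 0 < fEα j)
      simpa using this
    have hsum2 : ∑ i, (Finset.univ.filter fun j => 0 < fVE i j).card = 3 * m := by
      unfold cost3P at hcost
      have k2' : 3 * m ≤ ∑ i, (Finset.univ.filter fun j => 0 < fVE i j).card := by
        calc 3 * m = ∑ _i : Fin (3 * m), 1 := by simp
          _ ≤ _ := Finset.sum_le_sum fun i _ => k2 i
      omega
    -- each middle count equals 1
    have hone : ∀ i : Fin (3 * m), (Finset.univ.filter fun j => 0 < fVE i j).card = 1 := by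
      intro i
      have hA : (Finset.univ.filter fun j => 0 < fVE i j).card +
          ∑ x ∈ Finset.univ.erase i, (Finset.univ.filter fun j => 0 < fVE x j).card =
          ∑ x : Fin (3 * m), (Finset.univ.filter fun j => 0 < fVE x j).card :=
        Finset.add_sum_erase _ (fun x => (Finset.univ.filter fun j => 0 < fVE x j).card)
          (Finset.mem_univ i)
      have hcard : (Finset.univ.erase i).card = 3 * m - 1 := by
        rw [Finset.card_erase_of_mem (Finset.mem_univ i)]; simp
      have hE : (Finset.univ.erase i).card ≤
          ∑ x ∈ Finset.univ.erase i, (Finset.univ.filter fun j => 0 < fVE x j).card := by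
        have := Finset.card_nsmul_le_sum (Finset.univ.erase i)
          (fun x => (Finset.univ.filter fun j => 0 < fVE x j).card) 1 (fun x _ => k2 x)
        simpa using this
      have := k2 i
      omega
    choose part hpart using fun i => Finset.card_eq_one.mp (hone i)
    have hmem : ∀ i j, 0 < fVE i j ↔ j = part i := by
      intro i j
      constructor
      · intro h
        have : j ∈ Finset.univ.filter fun j => 0 < fVE i j := by simp [h]
        rw [hpart i] at this; simpa using this
      · rintro rfl
        have : part i ∈ ({part i} : Finset (Fin m)) := Finset.mem_singleton_self _
        rw [← hpart i] at this; simpa using this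
    have hzero : ∀ i j, j ≠ part i → fVE i j = 0 := by
      intro i j hj
      by_contra h
      exact hj ((hmem i j).mp (Nat.pos_of_ne_zero h))
    have hval : ∀ i, fVE i (part i) = fαV i := by
      intro i
      rw [h5 i]
      exact (Finset.sum_eq_single (part i) (fun j _ hj => hzero i j hj) (by simp)).symm
    -- total flow equals m*B exactly
    have hge : m * B ≤ ∑ i, fαV i := by rw [← hsum]; exact Finset.sum_le_sum fun i _ => h4 i
    have hle : ∑ j, fEα j ≤ m * B := by
      calc ∑ j, fEα j ≤ ∑ _j : Fin m, B := Finset.sum_le_sum fun j _ => h3 j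
        _ = m * B := by simp [Finset.sum_const, mul_comm]
    have htot : ∑ i, fαV i = m * B := by omega
    have hαs : ∀ i, fαV i = s i := by
      have := (Finset.sum_eq_sum_iff_of_le (fun i (_ : i ∈ Finset.univ) => h4 i)).mp
        (by rw [hsum, htot])
      exact fun i => (this i (Finset.mem_univ i)).symm
    have hEB : ∀ j, fEα j = B := by
      have hE : ∑ j, fEα j = ∑ _j : Fin m, B := by
        rw [h7, htot]; simp [Finset.sum_const, mul_comm]
      exact fun j => (Finset.sum_eq_sum_iff_of_le (fun j (_ : j ∈ Finset.univ) => h3 j)).mp hE j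
        (Finset.mem_univ j)
    refine ⟨part, fun j => ?_⟩
    have hBsum : ∑ i ∈ Finset.univ.filter (fun i => part i = j), s i = B := by
      have e1 : ∑ i, fVE i j = ∑ i ∈ Finset.univ.filter (fun i => part i = j), fVE i j := by
        refine (Finset.sum_subset (Finset.filter_subset _ _) ?_).symm
        intro x _ hx
        simp only [Finset.mem_filter, Finset.mem_univ, true_and] at hx
        exact hzero x j (fun h => hx h.symm)
      have e2 : ∑ i ∈ Finset.univ.filter (fun i => part i = j), fVE i j =
          ∑ i ∈ Finset.univ.filter (fun i => part i = j), s i := by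
        refine Finset.sum_congr rfl fun i hi => ?_
        simp only [Finset.mem_filter, Finset.mem_univ, true_and] at hi
        rw [← hi, hval i, hαs i]
      rw [← e2, ← e1, h6 j, hEB j]
    refine ⟨?_, hBsum⟩
    -- cardinality is 3
    set T := Finset.univ.filter (fun i : Fin (3 * m) => part i = j) with hT
    have c1 : 2 * B + T.card ≤ T.card * B := by
      have e : ∑ i ∈ T, (2 * s i + 1) = 2 * B + T.card := by
        rw [Finset.sum_add_distrib, ← Finset.mul_sum, hBsum]; simp
      have le1 : ∑ i ∈ T, (2 * s i + 1) ≤ ∑ _i ∈ T, B :=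
        Finset.sum_le_sum fun i _ => by have := hub i; omega
      rw [Finset.sum_const, smul_eq_mul] at le1
      omega
    have c2 : T.card * (B + 1) ≤ 4 * B := by
      have le1 : ∑ _i ∈ T, (B + 1) ≤ ∑ i ∈ T, 4 * s i :=
        Finset.sum_le_sum fun i _ => by have := hlb i; omega
      rw [Finset.sum_const, smul_eq_mul, ← Finset.mul_sum, hBsum] at le1
      exact le1
    have hk1 : 1 ≤ T.card := by
      rcases Nat.eq_zero_or_pos T.card with h0 | h
      · exfalso
        rw [Finset.card_eq_zero] at h0
        rw [h0] at hBsum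
        simp at hBsum
        omega
      · exact h
    by_contra hne
    rcases Nat.lt_or_ge T.card 3 with h | h
    · have h2' : T.card ≤ 2 := by omega
      have := Nat.mul_le_mul h2' (le_refl B)
      omega
    · have h4' : 4 ≤ T.card := by omega
      have := Nat.mul_le_mul h4' (le_refl (B + 1))
      omega
  · -- backward: partition gives a feasible circulation of cost 7m
    rintro ⟨part, hpart⟩
    refine ⟨s, (fun i j => if part i = j then s i else 0), (fun _ => B), ?_, ?_⟩
    · unfold Feas3P
      refine ⟨?_, ?_, ?_, ?_, ?_, ?_, ?_⟩
      · intro i; have := hub i; omega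
      · intro i j
        have := hub i
        show (if part i = j then s i else 0) ≤ B
        split <;> omega
      · intro j; exact le_refl B
      · intro i; exact le_refl (s i)
      · intro i
        show s i = ∑ j, if part i = j then s i else 0
        rw [Finset.sum_ite_eq Finset.univ (part i) (fun _ => s i)]
        simp
      · intro j
        show (∑ i, if part i = j then s i else 0) = B
        rw [← Finset.sum_filter]
        exact (hpart j).2
      · rw [hsum]; simp [Finset.sum_const, mul_comm]
    · unfold cost3P
      have e1 : (Finset.univ.filter fun i : Fin (3 * m) => 0 < s i) = Finset.univ :=
        Finset.filter_true_of_mem fun i _ => hspos i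
      have e2 : ∀ i : Fin (3 * m),
          (Finset.univ.filter fun j => 0 < if part i = j then s i else 0) = {part i} := by
        intro i
        ext j
        simp only [Finset.mem_filter, Finset.mem_univ, true_and, Finset.mem_singleton]
        constructor
        · intro h; by_contra hne; rw [if_neg (fun he => hne he.symm)] at h; omega
        · rintro rfl; rw [if_pos rfl]; exact hspos i
      have e3 : (Finset.univ.filter fun _j : Fin m => 0 < B) = Finset.univ :=
        Finset.filter_true_of_mem fun j _ => by omega
      rw [e1, e3]
      simp only [e2, Finset.card_singleton, Finset.sum_const, Finset.card_univ, Fintype.card_fin,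
        smul_eq_mul, mul_one]
      ring
end

section
/- In the scenario of the 3-SAT reduction for the proactive max-flow with distance d_val, any feasible integer scenario flow is either the zero flow or sends exactly one unit along a path (s, l, C_p, t) for some literal l occurring in clause C_p. -/
/-- Scenario flow in the 3-SAT max-flow reduction (distance `d_val`).
Literals are pairs `(i, b) : Fin n × Bool`; `lits` is the set of (three) literals of
clause `C_p`.  `fs l` is the flow on arc `s → l`, `flx l` on `l → x`, `flC l` on
`l → C_p`, `fxt i` on `x_i → t` (scenario capacity 0) and `fCt` on `C_p → t`
(scenario capacity 1).  Arcs `s → C_q` and `C_q → t`, `q ≠ p`, have capacity 0 and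
are omitted. -/
theorem mf_sat_scenario_flow_structure
    (n : ℕ) (lits : Finset (Fin n × Bool))
    (fs flx flC : Fin n × Bool → ℕ) (fxt : Fin n → ℕ) (fCt : ℕ)
    -- scenario capacities
    (hxt : ∀ i, fxt i = 0) (hCt : fCt ≤ 1)
    (hlits : ∀ l, l ∉ lits → flC l = 0)
    -- conservation
    (hl : ∀ l, fs l = flx l + flC l)
    (hx : ∀ i, flx (i, true) + flx (i, false) = fxt i)
    (hC : ∑ l ∈ lits, flC l = fCt) :
    ((∀ l, fs l = 0 ∧ flx l = 0 ∧ flC l = 0) ∧ fCt = 0) ∨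
    (∃ l ∈ lits, fCt = 1 ∧ fs l = 1 ∧ flC l = 1 ∧
      (∀ l', l' ≠ l → fs l' = 0 ∧ flC l' = 0) ∧ (∀ l', flx l' = 0)) := by
  have hflx : ∀ l, flx l = 0 := by
    rintro ⟨i, b⟩
    have := hx i
    rw [hxt i] at this
    cases b
    · omega
    · omega
  have hfs : ∀ l, fs l = flC l := by
    intro l; rw [hl l, hflx l]; omega
  interval_cases fCt
  · left
    refine ⟨fun l => ?_, rfl⟩
    have h0 : flC l = 0 := by
      by_cases hm : l ∈ lits
      · have := Finset.sum_eq_zero_iff.mp hC l hm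
        exact this
      · exact hlits l hm
    exact ⟨by rw [hfs l, h0], hflx l, h0⟩
  · right
    -- sum over lits of flC = 1, so exactly one element has flC = 1
    obtain ⟨l, hlmem, hone⟩ : ∃ l ∈ lits, flC l = 1 := by
      by_contra h
      push_neg at h
      have : ∀ l ∈ lits, flC l = 0 := by
        intro l hm
        have hle : flC l ≤ ∑ x ∈ lits, flC x := Finset.single_le_sum (fun _ _ => Nat.zero_le _) hm
        rw [hC] at hle
        have := h l hm
        omega
      have := Finset.sum_eq_zero this
      omega
    refine ⟨l, hlmem, rfl, by rw [hfs l, hone], hone, ?_, hflx⟩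
    intro l' hne
    have h0 : flC l' = 0 := by
      by_cases hm : l' ∈ lits
      · have := Finset.sum_eq_sum_sdiff_singleton_add hlmem flC
        rw [hC, hone] at this
        have hz : ∑ x ∈ lits \ {l}, flC x = 0 := by omega
        have := Finset.sum_eq_zero_iff.mp hz l' (by simp [hm, hne])
        exact this
      · exact hlits l' hm
    exact ⟨by rw [hfs l', h0], h0⟩
end
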